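/- arXiv:2602.18784 — 3 statements merged into one kernel-verified Lean document; each statement's English description precedes it below -/
import Mathlib

section
/- Let q be a probability distribution on the nonnegative integers with mean at most 1 and with q({1}) < 1, and let (Z_n)_{n≥0} be the Galton–Watson process with offspring distribution q started from Z_0 = 1. Then almost surely there exists n with Z_n = 0, i.e., the process dies out with probability 1. -/
open MeasureTheory ProbabilityTheory Finset
open scoped ENNReal NNReal

theorem gw_meas_sum {Ω : Type*} {m : MeasurableSpace Ω} {N : Ω → ℕ}
    (hN : Measurable[m] N) {g : ℕ → Ω → ℕ} (hg : ∀ i, Measurable[m] (g i)) :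
    Measurable[m] fun ω => ∑ i ∈ range (N ω), g i ω := by
  apply measurable_to_countable'
  intro y
  have h : (fun ω => ∑ i ∈ range (N ω), g i ω) ⁻¹' {y}
      = ⋃ k, (N ⁻¹' {k}) ∩ {ω | (∑ i ∈ range k, g i ω) = y} := by
    ext ω
    simp only [Set.mem_preimage, Set.mem_singleton_iff, Set.mem_iUnion, Set.mem_inter_iff,
      Set.mem_setOf_eq]
    constructor
    · intro hh; exact ⟨N ω, rfl, hh⟩
    · rintro ⟨k, rfl, hh⟩; exact hh
  rw [h]
  exact MeasurableSet.iUnion fun k => (hN (measurableSet_singleton k)).inter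
    ((Finset.measurable_sum _ fun i _ => hg i) (measurableSet_singleton y))

theorem gw_num {L : ℝ≥0∞} (hL : L < 1) {j : ℕ} (hj : 2 ≤ j) :
    1 - L ^ j < j * (1 - L) := by
  have hLtop : L ≠ ∞ := ne_top_of_lt hL
  lift L to ℝ≥0 using hLtop with l
  have hl1 : l < 1 := by exact_mod_cast hL
  rw [← ENNReal.coe_pow, ← ENNReal.coe_one, ← ENNReal.coe_sub, ← ENNReal.coe_sub,
    ← ENNReal.coe_natCast j, ← ENNReal.coe_mul, ENNReal.coe_lt_coe,
    ← NNReal.coe_lt_coe]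
  push_cast [NNReal.coe_sub (pow_le_one' hl1.le j), NNReal.coe_sub hl1.le]
  set r := (l : ℝ) with hr
  have hr0 : 0 ≤ r := l.coe_nonneg
  have hr1 : r < 1 := by exact_mod_cast hl1
  have h1r : 0 < 1 - r := by linarith
  have hsum : (∑ i ∈ range j, r ^ i) < j := by
    have h := Finset.sum_lt_sum (s := range j) (f := fun i => r ^ i) (g := fun _ => (1 : ℝ))
      (fun i _ => pow_le_one₀ hr0 hr1.le)
      ⟨1, Finset.mem_range.mpr (by omega), by simpa using hr1⟩
    simpa using h
  have h2 : (∑ i ∈ range j, r ^ i) * (1 - r) = 1 - r ^ j := by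
    have h := geom_sum_mul r j
    have h3 : (∑ i ∈ range j, r ^ i) * (1 - r) = -((∑ i ∈ range j, r ^ i) * (r - 1)) := by ring
    rw [h3, h]; ring
  have := mul_lt_mul_of_pos_right hsum h1r
  linarith

/-- A Galton–Watson process whose offspring distribution `q` has mean at most `1`
and satisfies `q {1} < 1` dies out almost surely. -/
theorem twoTypeSIR_stmt1
    {Ω : Type*} [MeasurableSpace Ω] (P : Measure Ω) [IsProbabilityMeasure P]
    (q : Measure ℕ) [IsProbabilityMeasure q]
    (hqMean : ∫⁻ k, (k : ℝ≥0∞) ∂q ≤ 1)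
    (hq1 : q {1} < 1)
    (ξ : ℕ → ℕ → Ω → ℕ) (hξmeas : ∀ n i, Measurable (ξ n i))
    (hξlaw : ∀ n i, Measure.map (ξ n i) P = q)
    (hξindep : iIndepFun
      (fun ni : ℕ × ℕ => ξ ni.1 ni.2) P)
    (Z : ℕ → Ω → ℕ)
    (hZ0 : ∀ ω, Z 0 ω = 1)
    (hZsucc : ∀ n ω, Z (n + 1) ω = ∑ i ∈ range (Z n ω), ξ (n + 1) i ω) :
    ∀ᵐ ω ∂P, ∃ n, Z n ω = 0 := by
  classical
  set F : ℝ≥0∞ → ℝ≥0∞ := fun s => ∫⁻ k, s ^ k ∂q with hFdef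
  set mS : ℕ × ℕ → MeasurableSpace Ω :=
    fun p => MeasurableSpace.comap (fun ω => ξ p.1 p.2 ω) inferInstance with hmSdef
  have hmS_le : ∀ p, mS p ≤ ‹MeasurableSpace Ω› :=
    fun p => measurable_iff_comap_le.mp (hξmeas p.1 p.2)
  have hiIndep : iIndep mS P := hξindep
  set G : ℕ → MeasurableSpace Ω := fun n => ⨆ p ∈ {p : ℕ × ℕ | p.1 ≤ n}, mS p with hGdef
  have hG_le : ∀ n, G n ≤ ‹MeasurableSpace Ω› := fun n => iSup₂_le fun p _ => hmS_le p
  have hG_mono : ∀ n, G n ≤ G (n + 1) :=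
    fun n => biSup_mono fun p (hp : p.1 ≤ n) => hp.trans (Nat.le_succ n)
  have hmeas_xi_comap : ∀ nn i, Measurable[mS (nn, i)] (ξ nn i) :=
    fun nn i => measurable_iff_comap_le.mpr le_rfl
  have hZG : ∀ n, Measurable[G n] (Z n) := by
    intro n; induction n with
    | zero =>
      have h0 : Z 0 = fun _ => 1 := funext hZ0
      rw [h0]; exact measurable_const
    | succ n ih =>
      have hfun : Z (n + 1) = fun ω => ∑ i ∈ range (Z n ω), ξ (n + 1) i ω :=
        funext (hZsucc n)
      rw [hfun]
      refine gw_meas_sum (ih.mono (hG_mono n) le_rfl) fun i => ?_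
      exact (hmeas_xi_comap (n + 1) i).mono
        (le_iSup₂ (f := fun p (_ : p.1 ≤ n + 1) => mS p) (n + 1, i) (Nat.le_refl _)) le_rfl
  have hZmeas : ∀ n, Measurable (Z n) := fun n => (hZG n).mono (hG_le n) le_rfl
  set H : ℕ → MeasurableSpace Ω := fun n => ⨆ p ∈ {p : ℕ × ℕ | p.1 = n + 1}, mS p with hHdef
  have hH_le : ∀ n, H n ≤ ‹MeasurableSpace Ω› := fun n => iSup₂_le fun p _ => hmS_le p
  have hGH_indep : ∀ n, Indep (G n) (H n) P := by
    intro n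
    refine indep_iSup_of_disjoint hmS_le hiIndep ?_
    rw [Set.disjoint_left]
    intro p hp hp'
    simp only [Set.mem_setOf_eq] at hp hp'
    omega
  have hlaw : ∀ (nn i : ℕ) (s : ℝ≥0∞), ∫⁻ ω, s ^ ξ nn i ω ∂P = F s := by
    intro nn i s
    have h := lintegral_map (μ := P) (f := fun m : ℕ => s ^ m) (g := ξ nn i)
      (measurable_of_countable _) (hξmeas nn i)
    rw [hξlaw nn i] at h
    exact h.symm
  have hprod : ∀ (n k : ℕ) (s : ℝ≥0∞),
      ∫⁻ ω, ∏ i ∈ range k, s ^ ξ (n + 1) i ω ∂P = (F s) ^ k := by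
    intro n k s
    induction k with
    | zero => simp
    | succ k ih =>
      simp only [Finset.prod_range_succ]
      have hInd : Indep (⨆ p ∈ {p : ℕ × ℕ | p.1 = n + 1 ∧ p.2 < k}, mS p)
          (⨆ p ∈ ({(n + 1, k)} : Set (ℕ × ℕ)), mS p) P := by
        refine indep_iSup_of_disjoint hmS_le hiIndep ?_
        rw [Set.disjoint_left]
        rintro p hp rfl
        simp only [Set.mem_setOf_eq] at hp
        omega
      have hf : Measurable[⨆ p ∈ {p : ℕ × ℕ | p.1 = n + 1 ∧ p.2 < k}, mS p]
          fun ω => ∏ i ∈ range k, s ^ ξ (n + 1) i ω := by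
        refine Finset.measurable_prod _ fun i hi => ?_
        refine (measurable_of_countable fun m : ℕ => s ^ m).comp ?_
        exact (hmeas_xi_comap (n + 1) i).mono
          (le_iSup₂ (f := fun p (_ : p.1 = n + 1 ∧ p.2 < k) => mS p) (n + 1, i)
            ⟨rfl, Finset.mem_range.mp hi⟩) le_rfl
      have hg : Measurable[⨆ p ∈ ({(n + 1, k)} : Set (ℕ × ℕ)), mS p]
          fun ω => s ^ ξ (n + 1) k ω := by
        refine (measurable_of_countable fun m : ℕ => s ^ m).comp ?_
        exact (hmeas_xi_comap (n + 1) k).mono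
          (le_iSup₂ (f := fun p (_ : p ∈ ({(n + 1, k)} : Set (ℕ × ℕ))) => mS p) (n + 1, k)
            rfl) le_rfl
      rw [lintegral_mul_eq_lintegral_mul_lintegral_of_independent_measurableSpace
        (iSup₂_le fun p _ => hmS_le p) (iSup₂_le fun p _ => hmS_le p) hInd hf hg,
        ih, hlaw, pow_succ]
  have key : ∀ (n : ℕ) (s : ℝ≥0∞),
      ∫⁻ ω, s ^ Z (n + 1) ω ∂P = ∫⁻ ω, (F s) ^ Z n ω ∂P := by
    intro n s
    have hdecomp : ∀ ω, s ^ Z (n + 1) ω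
        = ∑' k : ℕ, Set.indicator (Z n ⁻¹' {k}) (fun _ => (1 : ℝ≥0∞)) ω
            * ∏ i ∈ range k, s ^ ξ (n + 1) i ω := by
      intro ω
      rw [tsum_eq_single (Z n ω) ?_]
      · rw [Set.indicator_of_mem (by exact rfl : ω ∈ Z n ⁻¹' {Z n ω}), one_mul,
          Finset.prod_pow_eq_pow_sum, ← hZsucc n ω]
      · intro k hk
        rw [Set.indicator_of_notMem (by simpa using (Ne.symm hk)), zero_mul]
    calc ∫⁻ ω, s ^ Z (n + 1) ω ∂P
        = ∫⁻ ω, ∑' k : ℕ, Set.indicator (Z n ⁻¹' {k}) (fun _ => (1 : ℝ≥0∞)) ω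
            * ∏ i ∈ range k, s ^ ξ (n + 1) i ω ∂P := lintegral_congr hdecomp
      _ = ∑' k : ℕ, ∫⁻ ω, Set.indicator (Z n ⁻¹' {k}) (fun _ => (1 : ℝ≥0∞)) ω
            * ∏ i ∈ range k, s ^ ξ (n + 1) i ω ∂P := by
          refine lintegral_tsum fun k => ?_
          exact ((measurable_const.indicator ((hZmeas n) (measurableSet_singleton k))).mul
            (Finset.measurable_prod _ fun i _ =>
              (measurable_of_countable fun m : ℕ => s ^ m).comp (hξmeas (n + 1) i))).aemeasurable
      _ = ∑' k : ℕ, P (Z n ⁻¹' {k}) * (F s) ^ k := by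
          refine tsum_congr fun k => ?_
          have hf : Measurable[G n] fun ω =>
              Set.indicator (Z n ⁻¹' {k}) (fun _ => (1 : ℝ≥0∞)) ω :=
            measurable_const.indicator ((hZG n) (measurableSet_singleton k))
          have hg : Measurable[H n] fun ω => ∏ i ∈ range k, s ^ ξ (n + 1) i ω := by
            refine Finset.measurable_prod _ fun i _ => ?_
            refine (measurable_of_countable fun m : ℕ => s ^ m).comp ?_
            exact (hmeas_xi_comap (n + 1) i).mono
              (le_iSup₂ (f := fun p (_ : p.1 = n + 1) => mS p) (n + 1, i) rfl) le_rfl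
          have hii : ∫⁻ ω, Set.indicator (Z n ⁻¹' {k}) (fun _ => (1 : ℝ≥0∞)) ω ∂P
              = P (Z n ⁻¹' {k}) := by
            rw [lintegral_indicator ((hZmeas n) (measurableSet_singleton k))]
            simp
          rw [lintegral_mul_eq_lintegral_mul_lintegral_of_independent_measurableSpace
            (hG_le n) (hH_le n) (hGH_indep n) hf hg, hii, hprod n k s]
      _ = ∫⁻ ω, (F s) ^ Z n ω ∂P := by
          have h1 : ∫⁻ ω, (F s) ^ Z n ω ∂P = ∑' k : ℕ, (F s) ^ k * (P.map (Z n)) {k} := by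
            rw [← lintegral_map (measurable_of_countable fun j : ℕ => (F s) ^ j) (hZmeas n),
              lintegral_countable']
          rw [h1]
          refine tsum_congr fun k => ?_
          rw [Measure.map_apply (hZmeas n) (measurableSet_singleton k), mul_comm]
  have hiter : ∀ (n : ℕ) (s : ℝ≥0∞), ∫⁻ ω, s ^ Z n ω ∂P = F^[n] s := by
    intro n
    induction n with
    | zero => intro s; simp [hZ0]
    | succ n ih => intro s; rw [key n s, ih (F s), ← Function.iterate_succ_apply]
  have hprob : ∀ n, P (Z n ⁻¹' {0}) = F^[n] 0 := by
    intro n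
    have hind : ∀ ω, ((0 : ℝ≥0∞)) ^ Z n ω
        = Set.indicator (Z n ⁻¹' {0}) (fun _ => (1 : ℝ≥0∞)) ω := by
      intro ω
      by_cases h : Z n ω = 0
      · rw [h, pow_zero, Set.indicator_of_mem (by exact h : ω ∈ Z n ⁻¹' {0})]
      · rw [zero_pow h, Set.indicator_of_notMem (by simpa using h)]
    rw [← hiter n 0, lintegral_congr hind,
      lintegral_indicator ((hZmeas n) (measurableSet_singleton 0))]
    simp
  -- Analysis of the iterates of the generating function
  set t : ℕ → ℝ≥0∞ := fun n => F^[n] 0 with htdef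
  have hF_mono : Monotone F := fun a b hab =>
    lintegral_mono fun k => pow_le_pow_left' hab k
  have hF_le_one : ∀ s, s ≤ 1 → F s ≤ 1 := by
    intro s hs
    calc F s ≤ ∫⁻ _, 1 ∂q := lintegral_mono fun k => pow_le_one' hs k
      _ = 1 := by simp
  have ht_succ : ∀ n, t (n + 1) = F (t n) := fun n => Function.iterate_succ_apply' F n 0
  have ht_le_one : ∀ n, t n ≤ 1 := by
    intro n; induction n with
    | zero => exact zero_le
    | succ n ih => rw [ht_succ]; exact hF_le_one _ ih
  have ht_mono : Monotone t := by
    refine monotone_nat_of_le_succ ?_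
    intro n; induction n with
    | zero => exact zero_le
    | succ n ih => rw [ht_succ, ht_succ]; exact hF_mono ih
  set L := ⨆ n, t n with hLdef
  have hL_le_one : L ≤ 1 := iSup_le ht_le_one
  have hL_ne_top : L ≠ ∞ := ne_top_of_le_ne_top ENNReal.one_ne_top hL_le_one
  have hLpow : ∀ k : ℕ, L ^ k = ⨆ n, t n ^ k := by
    intro k
    have h1 : Filter.Tendsto (fun n => t n ^ k) Filter.atTop (nhds (L ^ k)) :=
      ((ENNReal.continuous_pow k).continuousAt).tendsto.comp (tendsto_atTop_iSup ht_mono)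
    have h2 : Filter.Tendsto (fun n => t n ^ k) Filter.atTop (nhds (⨆ n, t n ^ k)) :=
      tendsto_atTop_iSup fun a b hab => pow_le_pow_left' (ht_mono hab) k
    exact tendsto_nhds_unique h1 h2
  have hFL : F L = L := by
    have h1 : F L = ⨆ n, F (t n) := by
      calc F L = ∫⁻ k, ⨆ n, t n ^ k ∂q := lintegral_congr fun k => hLpow k
        _ = ⨆ n, ∫⁻ k, t n ^ k ∂q :=
          lintegral_iSup (fun n => measurable_of_countable _)
            (fun a b hab k => pow_le_pow_left' (ht_mono hab) k)
    rw [h1]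
    calc (⨆ n, F (t n)) = ⨆ n, t (n + 1) := iSup_congr fun n => (ht_succ n).symm
      _ = L := le_antisymm (iSup_le fun n => le_iSup t (n + 1))
          (iSup_le fun n => le_trans (ht_mono (Nat.le_succ n))
            (le_iSup (fun m => t (m + 1)) n))
  have hq_tsum : ∀ s : ℝ≥0∞, F s = ∑' k : ℕ, s ^ k * q {k} := fun s => lintegral_countable' _
  have hpoint : ∀ (s : ℝ≥0∞), s ≤ 1 → ∀ k : ℕ, 1 ≤ (k : ℝ≥0∞) * (1 - s) + s ^ k := by
    intro s hs k
    induction k with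
    | zero => simp
    | succ k ih =>
      have h1 : s ^ k = s * s ^ k + (1 - s) * s ^ k := by
        rw [← add_mul, add_tsub_cancel_of_le hs, one_mul]
      have h2 : (1 - s) * s ^ k ≤ 1 - s := by
        calc (1 - s) * s ^ k ≤ (1 - s) * 1 := mul_le_mul_right (pow_le_one' hs k) _
          _ = 1 - s := mul_one _
      calc (1 : ℝ≥0∞) ≤ (k : ℝ≥0∞) * (1 - s) + s ^ k := ih
        _ = (k : ℝ≥0∞) * (1 - s) + (s * s ^ k + (1 - s) * s ^ k) := by rw [← h1]
        _ ≤ (k : ℝ≥0∞) * (1 - s) + (s * s ^ k + (1 - s)) := by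
            exact add_le_add_right (add_le_add_right h2 _) _
        _ = ((k + 1 : ℕ) : ℝ≥0∞) * (1 - s) + s ^ (k + 1) := by push_cast; ring
  have e1 : L + ∫⁻ k, (1 - L ^ k) ∂q = 1 := by
    have hpt : ∀ k : ℕ, L ^ k + (1 - L ^ k) = 1 :=
      fun k => add_tsub_cancel_of_le (pow_le_one' hL_le_one k)
    have h1 : ∫⁻ k, (L ^ k + (1 - L ^ k)) ∂q = 1 := by
      simp_rw [hpt]; simp
    rw [lintegral_add_left (measurable_of_countable _)] at h1
    rwa [show (∫⁻ a : ℕ, L ^ a ∂q) = L from hFL] at h1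
  have e2 : ∫⁻ k, (1 - L ^ k) ∂q = 1 - L :=
    ENNReal.eq_sub_of_add_eq hL_ne_top (by rw [add_comm]; exact e1)
  have e3 : ∫⁻ k, (k : ℝ≥0∞) * (1 - L) ∂q ≤ 1 - L := by
    rw [lintegral_mul_const' (1 - L) _ (by simp : (1 : ℝ≥0∞) - L ≠ ∞)]
    calc (∫⁻ k, (k : ℝ≥0∞) ∂q) * (1 - L) ≤ 1 * (1 - L) := mul_le_mul_left hqMean _
      _ = 1 - L := one_mul _
  have hL1 : L = 1 := by
    by_contra hne
    have hLlt : L < 1 := lt_of_le_of_ne hL_le_one hne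
    by_cases hcase : ∀ k, 2 ≤ k → q {k} = 0
    · -- q is supported on {0, 1}
      have huniv : (1 : ℝ≥0∞) = q {0} + q {1} := by
        have h0 : (1 : ℝ≥0∞) = ∑' k : ℕ, q {k} := by
          have h1 : ∫⁻ _ : ℕ, 1 ∂q = ∑' k : ℕ, 1 * q {k} := lintegral_countable' _
          simpa using h1
        rw [h0, tsum_eq_sum (s := ({0, 1} : Finset ℕ))
          (fun k hk => hcase k (by simp at hk; omega))]
        simp
      have hFL2 : F L = q {0} + q {1} * L := by
        rw [hq_tsum L, tsum_eq_sum (s := ({0, 1} : Finset ℕ))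
          (fun k hk => by rw [hcase k (by simp at hk; omega), mul_zero])]
        rw [Finset.sum_insert (by simp), Finset.sum_singleton]
        simp [mul_comm]
      have ha0 : (1 : ℝ≥0∞) - q {1} ≠ 0 := (tsub_pos_iff_lt.mpr hq1).ne'
      have ha_top : (1 : ℝ≥0∞) - q {1} ≠ ∞ :=
        ne_top_of_le_ne_top ENNReal.one_ne_top tsub_le_self
      have hmul_ne_top : q {1} * L ≠ ∞ :=
        ENNReal.mul_ne_top (measure_ne_top q _) hL_ne_top
      have hL_eq : L = q {0} + q {1} * L := by
        have h := hFL2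
        rw [hFL] at h
        exact h
      have hcalc : ((1 : ℝ≥0∞) - q {1}) * L = (1 - q {1}) * 1 := by
        rw [mul_one, ENNReal.sub_mul (fun _ _ => hL_ne_top), one_mul]
        calc L - q {1} * L = q {0} := ENNReal.sub_eq_of_eq_add hmul_ne_top hL_eq
          _ = 1 - q {1} := (ENNReal.sub_eq_of_eq_add (measure_ne_top q _) huniv).symm
      exact hne ((ENNReal.mul_right_inj ha0 ha_top).mp hcalc)
    · push_neg at hcase
      obtain ⟨j, hj2, hqj⟩ := hcase
      have hsub_ne_top : (1 : ℝ≥0∞) - L ≠ ∞ :=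
        ne_top_of_le_ne_top ENNReal.one_ne_top tsub_le_self
      have hF1 : ∫⁻ k, (1 - L ^ k) ∂q = ∑' k : ℕ, (1 - L ^ k) * q {k} :=
        lintegral_countable' _
      have hF2 : ∫⁻ k, (k : ℝ≥0∞) * (1 - L) ∂q
          = ∑' k : ℕ, ((k : ℝ≥0∞) * (1 - L)) * q {k} := lintegral_countable' _
      have hlt : ∑' k : ℕ, (1 - L ^ k) * q {k}
          < ∑' k : ℕ, ((k : ℝ≥0∞) * (1 - L)) * q {k} := by
        refine ENNReal.tsum_lt_tsum (i := j) ?_ ?_ ?_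
        · rw [← hF1, e2]; exact hsub_ne_top
        · intro k
          refine mul_le_mul_left ?_ _
          rw [tsub_le_iff_right]
          exact hpoint L hL_le_one k
        · exact ENNReal.mul_lt_mul_left hqj (measure_ne_top q _) (gw_num hLlt hj2)
      rw [← hF1, ← hF2, e2] at hlt
      exact absurd (hlt.trans_le e3) (lt_irrefl _)
  -- Conclusion
  have hsup : (⨆ n, P (Z n ⁻¹' {0})) = 1 := by
    calc (⨆ n, P (Z n ⁻¹' {0})) = ⨆ n, t n := iSup_congr fun n => hprob n
      _ = 1 := hL1
  have hunion : P (⋃ n, Z n ⁻¹' {0}) = 1 := by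
    refine le_antisymm prob_le_one ?_
    rw [← hsup]
    exact iSup_le fun n => measure_mono (Set.subset_iUnion (fun n => Z n ⁻¹' {0}) n)
  rw [ae_iff]
  have hcompl : {ω | ¬ ∃ n, Z n ω = 0} = (⋃ n, Z n ⁻¹' {0})ᶜ := by
    ext ω; simp
  rw [hcompl, prob_compl_eq_zero_iff
    (MeasurableSet.iUnion fun n => (hZmeas n) (measurableSet_singleton 0))]
  exact hunion
end

section
/- Let q be a probability distribution on the nonnegative integers with finite mean strictly greater than 1, and let (Z_n)_{n≥0} be the Galton–Watson process with offspring distribution q started from Z_0 = 1. Then ℙ(Z_n ≥ 1 for all n ≥ 0) > 0, i.e., the process survives with positive probability. -/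
open MeasureTheory ProbabilityTheory Finset ENNReal

theorem gw_geom_id (s : ℝ≥0∞) (hs : s ≤ 1) (k : ℕ) :
    s ^ k + (1 - s) * ∑ j ∈ range k, s ^ j = 1 := by
  induction k with
  | zero => simp
  | succ k ih =>
    rw [sum_range_succ, mul_add,
      ENNReal.sub_mul (fun _ _ => (pow_le_one' hs k).trans_lt one_lt_top |>.ne), one_mul,
      ← add_assoc, add_comm (s ^ (k+1)), add_assoc, ← pow_succ',
      add_tsub_cancel_of_le (pow_le_pow_of_le_one zero_le hs k.le_succ),
      add_comm, ih]

theorem gw_exists_s0 (q : Measure ℕ) [IsProbabilityMeasure q]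
    (hM : 1 < ∫⁻ k, (k : ℝ≥0∞) ∂q) :
    ∃ s : ℝ≥0∞, s < 1 ∧ ∫⁻ k, s ^ k ∂q ≤ s := by
  have hmeas : ∀ f : ℕ → ℝ≥0∞, Measurable f := fun f => measurable_from_top
  have htrunc : ∃ N : ℕ, 1 < ∫⁻ k, min (k : ℝ≥0∞) N ∂q := by
    have hsup : ⨆ N : ℕ, ∫⁻ k, min (k : ℝ≥0∞) N ∂q = ∫⁻ k, (k : ℝ≥0∞) ∂q := by
      rw [← lintegral_iSup (fun N => hmeas _)]
      · refine lintegral_congr fun k => ?_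
        refine le_antisymm (iSup_le fun N => min_le_left _ _) (le_iSup_of_le k (by simp))
      · intro a b hab k
        exact min_le_min le_rfl (by exact_mod_cast Nat.cast_le.2 hab)
    rw [← hsup] at hM
    exact lt_iSup_iff.mp hM
  obtain ⟨N, hN⟩ := htrunc
  set c : ℝ≥0∞ := ∫⁻ k, min (k : ℝ≥0∞) N ∂q with hc_def
  have hcN : c ≤ N := by
    calc c ≤ ∫⁻ _, (N : ℝ≥0∞) ∂q := lintegral_mono fun k => min_le_right _ _
    _ = N := by simp
  have hcne : c ≠ ∞ := (hcN.trans_lt (natCast_lt_top N)).ne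
  have hc0 : c ≠ 0 := by intro h; rw [h] at hN; exact (not_lt_of_ge zero_le_one) hN
  have hNpos : 0 < N := by
    rcases Nat.eq_zero_or_pos N with h | h
    · exfalso; rw [h] at hcN; simp at hcN; rw [hcN] at hN; exact (not_lt_of_ge zero_le_one) hN
    · exact h
  set s : ℝ≥0∞ := c⁻¹ ^ ((N : ℝ)⁻¹) with hs_def
  have hcinv1 : c⁻¹ < 1 := ENNReal.inv_lt_one.mpr hN
  have hs1 : s < 1 := ENNReal.rpow_lt_one hcinv1 (by positivity)
  have hsle1 : s ≤ 1 := hs1.le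
  have hsN : s ^ N = c⁻¹ := by
    rw [hs_def, ← ENNReal.rpow_natCast (c⁻¹ ^ ((N:ℝ)⁻¹)) N, ← ENNReal.rpow_mul,
      inv_mul_cancel₀ (by exact_mod_cast hNpos.ne'), ENNReal.rpow_one]
  have hG : (1 : ℝ≥0∞) ≤ ∫⁻ k, ∑ j ∈ range k, s ^ j ∂q := by
    have hpt : ∀ k : ℕ, min (k : ℝ≥0∞) N * s ^ N ≤ ∑ j ∈ range k, s ^ j := by
      intro k
      have h1 : ∑ _j ∈ range (min k N), s ^ N ≤ ∑ j ∈ range (min k N), s ^ j :=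
        Finset.sum_le_sum fun j hj =>
          pow_le_pow_of_le_one zero_le hsle1 ((Finset.mem_range.1 hj).le.trans (min_le_right _ _))
      calc min (k : ℝ≥0∞) N * s ^ N = ∑ _j ∈ range (min k N), s ^ N := by
            rw [Finset.sum_const, Finset.card_range, nsmul_eq_mul]
            congr 1
            rcases le_total k N with h | h <;>
              simp [min_eq_left, min_eq_right, h, (Nat.cast_le (α := ℝ≥0∞)).2 h]
        _ ≤ ∑ j ∈ range (min k N), s ^ j := h1
        _ ≤ ∑ j ∈ range k, s ^ j :=
            Finset.sum_le_sum_of_subset (Finset.range_subset_range.2 (min_le_left _ _))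
    calc (1 : ℝ≥0∞) = s ^ N * c := by rw [hsN, ENNReal.inv_mul_cancel hc0 hcne]
      _ = ∫⁻ k, min (k : ℝ≥0∞) N * s ^ N ∂q := by
          rw [hc_def, mul_comm, ← lintegral_mul_const _ (hmeas _)]
      _ ≤ _ := lintegral_mono hpt
  refine ⟨s, hs1, ?_⟩
  have hkey : (∫⁻ k, s ^ k ∂q) + (1 - s) * ∫⁻ k, ∑ j ∈ range k, s ^ j ∂q = 1 := by
    rw [← lintegral_const_mul _ (hmeas _), ← lintegral_add_left (hmeas _)]
    simp_rw [gw_geom_id s hsle1]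
    simp
  have h2 : (∫⁻ k, s ^ k ∂q) + (1 - s) ≤ s + (1 - s) := by
    calc (∫⁻ k, s ^ k ∂q) + (1 - s)
        ≤ (∫⁻ k, s ^ k ∂q) + (1 - s) * ∫⁻ k, ∑ j ∈ range k, s ^ j ∂q := by
          gcongr; exact le_mul_of_one_le_right zero_le hG
      _ = 1 := hkey
      _ = s + (1 - s) := (add_tsub_cancel_of_le hsle1).symm
  exact (ENNReal.add_le_add_iff_right ((tsub_le_self.trans_lt one_lt_top).ne)).1 h2

/-- A Galton–Watson process whose offspring distribution `q` has finite mean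
strictly greater than `1` survives with positive probability. -/
theorem twoTypeSIR_stmt2
    {Ω : Type*} [MeasurableSpace Ω] (P : Measure Ω) [IsProbabilityMeasure P]
    (q : Measure ℕ) [IsProbabilityMeasure q]
    (hqInt : Integrable (fun k : ℕ => (k : ℝ)) q)
    (hqMean : 1 < ∫ k, (k : ℝ) ∂q)
    (ξ : ℕ → ℕ → Ω → ℕ) (hξmeas : ∀ n i, Measurable (ξ n i))
    (hξlaw : ∀ n i, Measure.map (ξ n i) P = q)
    (hξindep : iIndepFun
      (fun ni : ℕ × ℕ => ξ ni.1 ni.2) P)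
    (Z : ℕ → Ω → ℕ)
    (hZ0 : ∀ ω, Z 0 ω = 1)
    (hZsucc : ∀ n ω, Z (n + 1) ω = ∑ i ∈ range (Z n ω), ξ (n + 1) i ω) :
    0 < P {ω | ∀ n, 1 ≤ Z n ω} := by
  classical
  -- convert the mean hypothesis to a `lintegral`
  have hM : 1 < ∫⁻ k, (k : ℝ≥0∞) ∂q := by
    have h0 : ENNReal.ofReal (∫ k, (k : ℝ) ∂q) = ∫⁻ k, ENNReal.ofReal (k : ℝ) ∂q :=
      MeasureTheory.ofReal_integral_eq_lintegral_ofReal hqInt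
        (Filter.Eventually.of_forall fun k => Nat.cast_nonneg k)
    have h1 : ∫⁻ k, ENNReal.ofReal (k : ℝ) ∂q = ∫⁻ k, (k : ℝ≥0∞) ∂q :=
      lintegral_congr fun k => by simp [ENNReal.ofReal_natCast]
    rw [← h1, ← h0]
    calc (1 : ℝ≥0∞) = ENNReal.ofReal 1 := by simp
      _ < ENNReal.ofReal (∫ k, (k : ℝ) ∂q) :=
          (ENNReal.ofReal_lt_ofReal_iff (lt_trans one_pos hqMean)).2 hqMean
  obtain ⟨s, hs1, hFs⟩ := gw_exists_s0 q hM
  have hsle1 : s ≤ 1 := hs1.le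
  set F : ℝ≥0∞ := ∫⁻ j, s ^ j ∂q with hF_def
  -- σ-algebras
  set 𝓜 : ℕ × ℕ → MeasurableSpace Ω :=
    fun p => MeasurableSpace.comap (ξ p.1 p.2) inferInstance with h𝓜
  have h𝓜le : ∀ p, 𝓜 p ≤ ‹MeasurableSpace Ω› := fun p => (hξmeas p.1 p.2).comap_le
  have hiIndep : iIndep 𝓜 P := hξindep.iIndep
  set 𝓐 : ℕ → MeasurableSpace Ω := fun n => ⨆ p ∈ {p : ℕ × ℕ | p.1 ≤ n}, 𝓜 p with h𝓐
  have h𝓐le : ∀ n, 𝓐 n ≤ ‹MeasurableSpace Ω› := fun n => iSup₂_le fun p _ => h𝓜le p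
  have h𝓐mono : Monotone 𝓐 := fun a b hab => biSup_mono fun p hp => hp.trans hab
  have hmem : ∀ n m i, m ≤ n → Measurable[𝓐 n] (ξ m i) := fun n m i h =>
    measurable_iff_comap_le.2 (le_iSup₂_of_le (m, i) h le_rfl)
  -- measurability of `Z`
  have hZA : ∀ n, Measurable[𝓐 n] (Z n) := by
    intro n
    induction n with
    | zero =>
      have h : Z 0 = fun _ => 1 := funext hZ0
      rw [h]; exact measurable_const
    | succ n ih =>
      have h : Z (n+1) =
          (fun p : Ω × ℕ => ∑ i ∈ range p.2, ξ (n+1) i p.1) ∘ (fun ω => (ω, Z n ω)) :=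
        funext fun ω => hZsucc n ω
      rw [h]
      have hm1 : Measurable[Prod.instMeasurableSpace (m₁ := 𝓐 (n+1))]
          (fun p : Ω × ℕ => ∑ i ∈ range p.2, ξ (n+1) i p.1) :=
        measurable_from_prod_countable_left fun k => by
          exact Finset.measurable_sum (range k) fun i _ => hmem (n+1) (n+1) i le_rfl
      exact hm1.comp (Measurable.prodMk measurable_id (ih.mono (h𝓐mono n.le_succ) le_rfl))
  have hZmeas : ∀ n, Measurable (Z n) := fun n => (hZA n).mono (h𝓐le n) le_rfl
  -- single-variable integral
  have hxi_int : ∀ m i, ∫⁻ ω, s ^ ξ m i ω ∂P = F := by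
    intro m i
    rw [hF_def, ← hξlaw m i, lintegral_map measurable_from_top (hξmeas m i)]
  -- product over an independent family
  have hprod : ∀ n (k : ℕ), ∫⁻ ω, ∏ i ∈ range k, s ^ ξ (n+1) i ω ∂P = F ^ k := by
    intro n k
    induction k with
    | zero => simp
    | succ k ih =>
      have hsets : Disjoint {p : ℕ × ℕ | p.1 = n+1 ∧ p.2 < k} ({((n+1 : ℕ), k)} : Set (ℕ × ℕ)) := by
        rw [Set.disjoint_right]
        rintro p hp
        simp only [Set.mem_singleton_iff] at hp
        subst hp
        simp [Set.mem_setOf_eq]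
      have hind := indep_iSup_of_disjoint h𝓜le hiIndep hsets
      have hMfle : (⨆ p ∈ {p : ℕ × ℕ | p.1 = n+1 ∧ p.2 < k}, 𝓜 p) ≤ ‹MeasurableSpace Ω› :=
        iSup₂_le fun p _ => h𝓜le p
      have hMgle : (⨆ p ∈ ({((n+1 : ℕ), k)} : Set (ℕ × ℕ)), 𝓜 p) ≤ ‹MeasurableSpace Ω› :=
        iSup₂_le fun p _ => h𝓜le p
      have hf : Measurable[⨆ p ∈ {p : ℕ × ℕ | p.1 = n+1 ∧ p.2 < k}, 𝓜 p]
          (fun ω => ∏ i ∈ range k, s ^ ξ (n+1) i ω) :=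
        Finset.measurable_prod _ fun i hi =>
          measurable_from_top.comp
            (measurable_iff_comap_le.2
              (le_iSup₂_of_le ((n+1 : ℕ), i) ⟨rfl, Finset.mem_range.1 hi⟩ le_rfl))
      have hg : Measurable[⨆ p ∈ ({((n+1 : ℕ), k)} : Set (ℕ × ℕ)), 𝓜 p]
          (fun ω => s ^ ξ (n+1) k ω) :=
        measurable_from_top.comp
          (measurable_iff_comap_le.2 (le_iSup₂_of_le ((n+1 : ℕ), k) rfl le_rfl))
      have hmul := lintegral_mul_eq_lintegral_mul_lintegral_of_independent_measurableSpace
        hMfle hMgle hind hf hg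
      calc ∫⁻ ω, ∏ i ∈ range (k+1), s ^ ξ (n+1) i ω ∂P
          = ∫⁻ ω, (∏ i ∈ range k, s ^ ξ (n+1) i ω) * s ^ ξ (n+1) k ω ∂P := by
            simp_rw [prod_range_succ]
        _ = (∫⁻ ω, ∏ i ∈ range k, s ^ ξ (n+1) i ω ∂P) * ∫⁻ ω, s ^ ξ (n+1) k ω ∂P := hmul
        _ = F ^ k * F := by rw [ih, hxi_int]
        _ = F ^ (k+1) := (pow_succ F k).symm
  -- partition of the space according to the value of `Z n`
  have hpart : ∀ n (g : Ω → ℝ≥0∞), Measurable g →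
      ∫⁻ ω, g ω ∂P = ∑' k : ℕ, ∫⁻ ω in Z n ⁻¹' {k}, g ω ∂P := by
    intro n g hg
    have hU : (⋃ k : ℕ, Z n ⁻¹' {k}) = Set.univ := by ext ω; simp
    rw [← setLIntegral_univ, ← hU,
      lintegral_iUnion (fun k => hZmeas n (measurableSet_singleton k))
        (fun i j hij => Set.disjoint_left.2 fun ω h1 h2 => hij (h1.symm.trans h2))]
  -- splitting off an independent indicator
  have hsplit : ∀ n (k : ℕ) (g : Ω → ℝ≥0∞),
      Measurable[⨆ p ∈ {p : ℕ × ℕ | p.1 = n+1}, 𝓜 p] g →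
      ∫⁻ ω in Z n ⁻¹' {k}, g ω ∂P = P (Z n ⁻¹' {k}) * ∫⁻ ω, g ω ∂P := by
    intro n k g hg
    have hMBle : (⨆ p ∈ {p : ℕ × ℕ | p.1 = n+1}, 𝓜 p) ≤ ‹MeasurableSpace Ω› :=
      iSup₂_le fun p _ => h𝓜le p
    have hdisj : Disjoint {p : ℕ × ℕ | p.1 ≤ n} {p : ℕ × ℕ | p.1 = n+1} := by
      rw [Set.disjoint_left]
      rintro p hp hp'
      simp only [Set.mem_setOf_eq] at hp hp'
      omega
    have hind : Indep (𝓐 n) (⨆ p ∈ {p : ℕ × ℕ | p.1 = n+1}, 𝓜 p) P :=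
      indep_iSup_of_disjoint h𝓜le hiIndep hdisj
    have hA : MeasurableSet[𝓐 n] (Z n ⁻¹' {k}) := hZA n (measurableSet_singleton k)
    have hAmeas : MeasurableSet (Z n ⁻¹' {k}) := h𝓐le n _ hA
    have hf : Measurable[𝓐 n] ((Z n ⁻¹' {k}).indicator (fun _ => (1 : ℝ≥0∞))) :=
      measurable_const.indicator hA
    have hgm : Measurable g := hg.mono hMBle le_rfl
    calc ∫⁻ ω in Z n ⁻¹' {k}, g ω ∂P
        = ∫⁻ ω, (Z n ⁻¹' {k}).indicator g ω ∂P := (lintegral_indicator hAmeas g).symm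
      _ = ∫⁻ ω, (Z n ⁻¹' {k}).indicator (fun _ => (1 : ℝ≥0∞)) ω * g ω ∂P := by
          refine lintegral_congr fun ω => ?_
          by_cases h : ω ∈ Z n ⁻¹' {k} <;> simp [h]
      _ = (∫⁻ ω, (Z n ⁻¹' {k}).indicator (fun _ => (1 : ℝ≥0∞)) ω ∂P) * ∫⁻ ω, g ω ∂P :=
          lintegral_mul_eq_lintegral_mul_lintegral_of_independent_measurableSpace
            (h𝓐le n) hMBle hind hf hg
      _ = P (Z n ⁻¹' {k}) * ∫⁻ ω, g ω ∂P := by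
          rw [lintegral_indicator hAmeas, setLIntegral_one]
  -- the key recursion
  have hstep : ∀ n, ∫⁻ ω, s ^ Z (n+1) ω ∂P = ∫⁻ ω, F ^ Z n ω ∂P := by
    intro n
    have hmg1 : Measurable fun ω => s ^ Z (n+1) ω :=
      measurable_from_top.comp (hZmeas (n+1))
    have hmg2 : Measurable fun ω => F ^ Z n ω := measurable_from_top.comp (hZmeas n)
    rw [hpart n _ hmg1, hpart n _ hmg2]
    refine tsum_congr fun k => ?_
    have hAmeas : MeasurableSet (Z n ⁻¹' {k}) := hZmeas n (measurableSet_singleton k)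
    have hL : ∫⁻ ω in Z n ⁻¹' {k}, s ^ Z (n+1) ω ∂P
        = ∫⁻ ω in Z n ⁻¹' {k}, ∏ i ∈ range k, s ^ ξ (n+1) i ω ∂P := by
      refine setLIntegral_congr_fun hAmeas (fun ω hω => ?_)
      have hk : Z n ω = k := hω
      rw [hZsucc n ω, hk, ← Finset.prod_pow_eq_pow_sum]
    have hR : ∫⁻ ω in Z n ⁻¹' {k}, F ^ Z n ω ∂P = F ^ k * P (Z n ⁻¹' {k}) := by
      rw [setLIntegral_congr_fun hAmeas
        (fun ω hω => by rw [show Z n ω = k from hω]),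
        setLIntegral_const]
    have hBmeas : Measurable[⨆ p ∈ {p : ℕ × ℕ | p.1 = n+1}, 𝓜 p]
        (fun ω => ∏ i ∈ range k, s ^ ξ (n+1) i ω) :=
      Finset.measurable_prod _ fun i _ =>
        measurable_from_top.comp
          (measurable_iff_comap_le.2 (le_iSup₂_of_le ((n+1 : ℕ), i) rfl le_rfl))
    rw [hL, hsplit n k _ hBmeas, hprod n k, hR, mul_comm]
  -- the main estimate
  have hEn : ∀ n, ∫⁻ ω, s ^ Z n ω ∂P ≤ s := by
    intro n
    induction n with
    | zero => simp_rw [hZ0, pow_one]; simp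
    | succ n ih =>
      rw [hstep n]
      calc ∫⁻ ω, F ^ Z n ω ∂P ≤ ∫⁻ ω, s ^ Z n ω ∂P :=
            lintegral_mono fun ω => pow_le_pow_left' hFs _
        _ ≤ s := ih
  have hzero : ∀ n, P (Z n ⁻¹' {0}) ≤ s := by
    intro n
    have hAmeas : MeasurableSet (Z n ⁻¹' {0}) := hZmeas n (measurableSet_singleton 0)
    calc P (Z n ⁻¹' {0}) = ∫⁻ _ω in Z n ⁻¹' {0}, 1 ∂P := (setLIntegral_one _).symm
      _ = ∫⁻ ω, (Z n ⁻¹' {0}).indicator (fun _ => (1 : ℝ≥0∞)) ω ∂P :=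
          (lintegral_indicator hAmeas _).symm
      _ ≤ ∫⁻ ω, s ^ Z n ω ∂P := by
          refine lintegral_mono fun ω => ?_
          by_cases h : ω ∈ Z n ⁻¹' {0}
          · have h0 : Z n ω = 0 := h
            simp [h, h0]
          · simp [h]
      _ ≤ s := hEn n
  have hsurv : ∀ n, 1 - s ≤ P {ω | 1 ≤ Z n ω} := by
    intro n
    have hcompl : {ω | 1 ≤ Z n ω} = (Z n ⁻¹' {0})ᶜ := by
      ext ω; simp [Nat.one_le_iff_ne_zero]
    rw [hcompl, measure_compl (hZmeas n (measurableSet_singleton 0)) (measure_ne_top P _),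
      measure_univ]
    exact tsub_le_tsub_left (hzero n) 1
  have hset : {ω | ∀ n, 1 ≤ Z n ω} = ⋂ n, {ω | 1 ≤ Z n ω} := by
    ext ω; simp [Set.mem_iInter]
  have hanti : Antitone fun n => {ω | 1 ≤ Z n ω} := by
    refine antitone_nat_of_succ_le fun n ω hω => ?_
    by_contra h
    have h0 : Z n ω = 0 := Nat.lt_one_iff.1 (not_le.1 h)
    have : Z (n+1) ω = 0 := by rw [hZsucc n ω, h0]; simp
    rw [Set.mem_setOf_eq, this] at hω
    omega
  have hmeasI : ∀ n, MeasurableSet {ω | 1 ≤ Z n ω} := fun n =>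
    hZmeas n (measurableSet_Ici (a := 1))
  have htend := tendsto_measure_iInter_atTop
    (fun n => (hmeasI n).nullMeasurableSet) hanti ⟨0, measure_ne_top P _⟩
  rw [hset]
  have hge : 1 - s ≤ P (⋂ n, {ω | 1 ≤ Z n ω}) :=
    ge_of_tendsto htend (Filter.Eventually.of_forall fun n => hsurv n)
  exact lt_of_lt_of_le (tsub_pos_of_lt hs1) hge
end

section
/- Let (X_n)_{n≥0} be a supermartingale with respect to a filtration (F_n)_{n≥0} on a probability space, such that each X_n takes values in the nonnegative integers and such that the state 0 is absorbing (almost surely, X_n = 0 implies X_{n+1} = 0). Suppose there exists a constant c ∈ (0,1] such that for every n ≥ 0, ℙ(X_{n+1} = 0 | F_n) ≥ c^{X_n} almost surely. Then almost surely there exists n with X_n = 0; equivalently, X_n → 0 almost surely. (This is the key step in the proof of Theorem 1.2, applied to the number X_n of vertices in generation n of the Galton–Watson tree that are eventually infected with both diseases.) -/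
open MeasureTheory ProbabilityTheory Filter Topology

/-- Two naturals whose real casts are within distance less than 1 are equal. -/
lemma nat_eq_of_abs_cast_lt_one {a b : ℕ} (h : |(a : ℝ) - b| < 1) : a = b := by
  by_contra hne
  rw [abs_sub_lt_iff] at h
  rcases Nat.lt_or_ge a b with hab | hab
  · have hb : (a : ℝ) + 1 ≤ b := by exact_mod_cast Nat.succ_le_of_lt hab
    linarith [h.2]
  · have hab' : b < a := lt_of_le_of_ne hab fun hh => hne hh.symm
    have hb : (b : ℝ) + 1 ≤ a := by exact_mod_cast Nat.succ_le_of_lt hab'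
    linarith [h.1]

/-- A converging sequence of naturals (cast to ℝ) is eventually constant. -/
lemma eventually_const_of_tendsto {x : ℕ → ℕ} {L : ℝ}
    (h : Tendsto (fun n => (x n : ℝ)) atTop (𝓝 L)) :
    ∃ N, ∀ n ≥ N, x n = x N := by
  have hc : CauchySeq (fun n => (x n : ℝ)) := h.cauchySeq
  rw [Metric.cauchySeq_iff'] at hc
  obtain ⟨N, hN⟩ := hc (1/2) (by norm_num)
  refine ⟨N, fun n hn => ?_⟩
  have := hN n hn
  rw [Real.dist_eq] at this
  exact nat_eq_of_abs_cast_lt_one (by linarith)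

open MeasureTheory in
/-- **Key step in the proof of Theorem 1.2.** Let `X` be a nonnegative-integer-valued
supermartingale for which `0` is absorbing, and suppose there is a constant `c ∈ (0,1]`
such that `ℙ(X (n+1) = 0 | F n) ≥ c ^ (X n)` a.s. for every `n`. Then almost surely
`X n = 0` for some `n`. -/
theorem twoTypeSIR_stmt10
    {Ω : Type*} {m0 : MeasurableSpace Ω} (P : Measure Ω) [IsProbabilityMeasure P]
    (F : Filtration ℕ m0)
    (X : ℕ → Ω → ℕ)
    (hX : Supermartingale (fun n ω => (X n ω : ℝ)) F P)
    (habs : ∀ n, ∀ᵐ ω ∂P, X n ω = 0 → X (n + 1) ω = 0)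
    (c : ℝ) (hc0 : 0 < c) (hc1 : c ≤ 1)
    (hcond : ∀ n, ∀ᵐ ω ∂P,
      c ^ (X n ω) ≤
        (P[Set.indicator {ω' | X (n + 1) ω' = 0} (fun _ => (1 : ℝ)) | F n]) ω) :
    ∀ᵐ ω ∂P, ∃ n, X n ω = 0 := by
  -- the sets {X n = 0}
  set S : ℕ → Set Ω := fun n => {ω' | X n ω' = 0} with hS
  have hSmeas : ∀ n, MeasurableSet[F n] (S n) := by
    intro n
    have : S n = (fun ω => (X n ω : ℝ)) ⁻¹' {0} := by
      ext ω; simp [hS, Nat.cast_eq_zero]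
    rw [this]
    exact (hX.stronglyAdapted n).measurable (measurableSet_singleton 0)
  have hSmeas0 : ∀ n, MeasurableSet (S n) := fun n => F.le n _ (hSmeas n)
  -- the absorption event A
  set A : Set Ω := ⋃ n, S n with hA
  have hAsup : MeasurableSet[⨆ n, F n] A :=
    MeasurableSet.iUnion fun n => (le_iSup F n : F n ≤ ⨆ n, F n) _ (hSmeas n)
  have hAmeas : MeasurableSet A := MeasurableSet.iUnion fun n => hSmeas0 n
  set g : Ω → ℝ := A.indicator (fun _ => (1 : ℝ)) with hg
  have hgint : Integrable g P := (integrable_const (1 : ℝ)).indicator hAmeas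
  have hgmeas : StronglyMeasurable[⨆ n, F n] g :=
    stronglyMeasurable_const.indicator hAsup
  -- Lévy's upward theorem
  have hlevy : ∀ᵐ ω ∂P, Tendsto (fun n => (P[g | F n]) ω) atTop (𝓝 (g ω)) :=
    hgint.tendsto_ae_condExp hgmeas
  -- indicator comparison: S (n+1) ⊆ A
  have hind : ∀ n, (P[(S (n + 1)).indicator (fun _ => (1 : ℝ)) | F n]) ≤ᵐ[P] (P[g | F n]) := by
    intro n
    refine condExp_mono ((integrable_const (1 : ℝ)).indicator (hSmeas0 (n + 1))) hgint ?_
    refine Eventually.of_forall fun ω => ?_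
    exact Set.indicator_le_indicator_of_subset (Set.subset_iUnion S (n + 1))
      (fun _ => zero_le_one) ω
  -- a.s. convergence of X (nonnegative supermartingale)
  have hsub : Submartingale (fun n ω => -(X n ω : ℝ)) F P := hX.neg
  set R : NNReal := (eLpNorm (fun ω => (X 0 ω : ℝ)) 1 P).toNNReal with hR
  have heLp : ∀ n, eLpNorm (fun ω => (X n ω : ℝ)) 1 P = ENNReal.ofReal (∫ ω, (X n ω : ℝ) ∂P) := by
    intro n
    rw [eLpNorm_one_eq_lintegral_enorm,
      ← ofReal_integral_norm_eq_lintegral_enorm (hX.integrable n)]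
    congr 1
    exact integral_congr_ae (Eventually.of_forall fun ω => by
      simp [Real.norm_eq_abs, Nat.abs_cast])
  have hintle : ∀ n, ∫ ω, (X n ω : ℝ) ∂P ≤ ∫ ω, (X 0 ω : ℝ) ∂P := by
    intro n
    calc ∫ ω, (X n ω : ℝ) ∂P = ∫ ω, (P[(fun ω => (X n ω : ℝ)) | F 0]) ω ∂P :=
          (integral_condExp (F.le 0)).symm
    _ ≤ ∫ ω, (X 0 ω : ℝ) ∂P :=
          integral_mono_ae integrable_condExp (hX.integrable 0) (hX.condExp_ae_le (Nat.zero_le n))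
  have hbdd : ∀ n, eLpNorm (fun ω => -(X n ω : ℝ)) 1 P ≤ R := by
    intro n
    have hneg : (fun ω => -(X n ω : ℝ)) = -(fun ω => (X n ω : ℝ)) := rfl
    rw [hneg, eLpNorm_neg, heLp n, hR, heLp 0,
      ENNReal.coe_toNNReal (by exact ENNReal.ofReal_ne_top)]
    exact ENNReal.ofReal_le_ofReal (hintle n)
  have hconv : ∀ᵐ ω ∂P, ∃ L, Tendsto (fun n => -(X n ω : ℝ)) atTop (𝓝 L) :=
    hsub.exists_ae_tendsto_of_bdd hbdd
  -- combine everything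
  have hcond' : ∀ᵐ ω ∂P, ∀ n,
      c ^ (X n ω) ≤ (P[(S (n + 1)).indicator (fun _ => (1 : ℝ)) | F n]) ω :=
    ae_all_iff.2 hcond
  have hind' : ∀ᵐ ω ∂P, ∀ n,
      (P[(S (n + 1)).indicator (fun _ => (1 : ℝ)) | F n]) ω ≤ (P[g | F n]) ω :=
    ae_all_iff.2 hind
  filter_upwards [hconv, hlevy, hcond', hind'] with ω h1 h2 h3 h4
  by_contra hnot
  push_neg at hnot
  -- ω ∉ A, so g ω = 0
  have hωA : ω ∉ A := by
    simp only [hA, Set.mem_iUnion, not_exists]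
    intro n hn
    exact hnot n hn
  have hgω : g ω = 0 := Set.indicator_of_notMem hωA _
  rw [hgω] at h2
  -- X n ω is eventually constant
  obtain ⟨L, hL⟩ := h1
  have hL' : Tendsto (fun n => (X n ω : ℝ)) atTop (𝓝 (-L)) := by
    have := hL.neg
    simpa using this
  obtain ⟨N, hN⟩ := eventually_const_of_tendsto hL'
  -- c ^ (X N ω) ≤ (P[g | F n]) ω for n ≥ N
  have hle : c ^ (X N ω) ≤ (0 : ℝ) := by
    refine ge_of_tendsto h2 ?_
    filter_upwards [eventually_ge_atTop N] with n hn
    calc c ^ (X N ω) = c ^ (X n ω) := by rw [hN n hn]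
    _ ≤ (P[(S (n + 1)).indicator (fun _ => (1 : ℝ)) | F n]) ω := h3 n
    _ ≤ (P[g | F n]) ω := h4 n
  exact absurd hle (not_le.2 (pow_pos hc0 _))
end
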